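/- Let d1 ≤ d2 ≤ d3 ≤ d4 be positive integers with socle degree e = d1+d2+d3+d4-4 even, and let (h_i) be the Hilbert function of an artinian complete intersection of type (d1,d2,d3,d4) in four variables. Then h_{e/2} - h_{e/2-1} equals 0 if d4 ≥ d1+d2+d3; equals (d1+d2+d3-d4)/2 if -d1+d2+d3 ≤ d4 ≤ d1+d2+d3; and equals d1 if d4 ≤ -d1+d2+d3. -/

import Mathlib

/-!
Multiplying a generating function by `1 + t + ⋯ + t^(d-1)` turns its first differences
`h i - h (i-1)` into `h i - h (i-d)`. Peeling off `d4` this way and then using the symmetry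
`h i = h (d1 + d2 + d3 - 3 - i)` of the codimension-three Hilbert function, the middle
difference becomes `h₃ (e/2) - h₃ (e/2 + 1)`; peeling off `d3` reduces it to two values of
the codimension-two Hilbert function, which is the explicit trapezoid
`n ↦ max 0 (min d1 (n + 1) (d1 + d2 - 1 - n))`, and the three cases follow by linear arithmetic.
-/

/-- The Hilbert function of an artinian complete intersection whose generator
degrees are given by the list `ds`: the coefficients of
`∏_j (1 + t + ⋯ + t^(d_j - 1))`, extended by `0` to negative indices. -/
noncomputable def hilbCI (ds : List ℕ) (i : ℤ) : ℤ :=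
  if i < 0 then 0
  else ((ds.map fun d => ∑ j ∈ Finset.range d, (Polynomial.X : Polynomial ℤ) ^ j)).prod.coeff
    i.toNat

open Finset Polynomial

def ciSocleDegree (ds : List ℕ) : ℤ := ds.sum - ds.length

theorem hilbCI_nil (i : ℤ) : hilbCI [] i = if i = 0 then 1 else 0 := by
  unfold hilbCI
  split_ifs <;> simp [coeff_one] <;> omega

theorem hilbCI_cons (d : ℕ) (ds : List ℕ) (i : ℤ) :
    hilbCI (d :: ds) i = ∑ j ∈ range d, hilbCI ds (i - j) := by
  unfold hilbCI
  simp only [List.map_cons, List.prod_cons, sum_mul, finsetSum_coeff, coeff_X_pow_mul']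
  split_ifs with hi
  · simp [show ∀ j : ℕ, i - j < 0 by omega]
  · refine sum_congr rfl fun j _ => ?_
    split_ifs <;> first | rfl | (congr 1; omega)

theorem hilbCI_perm {ds ds' : List ℕ} (h : ds.Perm ds') (i : ℤ) : hilbCI ds i = hilbCI ds' i := by
  unfold hilbCI
  rw [(h.map _).prod_eq]

theorem hilbCI_cons_sub (d : ℕ) (ds : List ℕ) (i : ℤ) :
    hilbCI (d :: ds) i - hilbCI (d :: ds) (i - 1) = hilbCI ds i - hilbCI ds (i - d) := by
  have h := sum_range_succ (fun j : ℕ => hilbCI ds (i - j)) d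
  rw [sum_range_succ'] at h
  simp only [hilbCI_cons, Nat.cast_add, Nat.cast_one, Nat.cast_zero, sub_zero] at h ⊢
  have : ∀ j : ℕ, i - (j + 1) = i - 1 - j := fun j => by ring
  simp only [this] at h
  linarith

theorem hilbCI_concat_sub (ds : List ℕ) (d : ℕ) (i : ℤ) :
    hilbCI (ds ++ [d]) i - hilbCI (ds ++ [d]) (i - 1) = hilbCI ds i - hilbCI ds (i - d) := by
  simp only [hilbCI_perm (List.perm_append_singleton d ds), hilbCI_cons_sub]

theorem hilbCI_symm (ds : List ℕ) (i : ℤ) : hilbCI ds i = hilbCI ds (ciSocleDegree ds - i) := by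
  induction ds generalizing i with
  | nil => simp [hilbCI_nil, ciSocleDegree]
  | cons d ds ih =>
    rw [hilbCI_cons, hilbCI_cons, ← sum_range_reflect]
    refine sum_congr rfl fun j hj => ?_
    rw [ih]
    congr 1
    simp only [ciSocleDegree, List.sum_cons, List.length_cons, mem_range] at hj ⊢
    push_cast
    omega

theorem hilbCI_singleton (b : ℕ) (k : ℤ) : hilbCI [b] k = if 0 ≤ k ∧ k < b then 1 else 0 := by
  rw [hilbCI_cons]
  simp only [hilbCI_nil]
  induction b with
  | zero => simp
  | succ b ih => rw [sum_range_succ, ih]; split_ifs <;> omega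

theorem hilbCI_pair (a b : ℕ) (n : ℤ) :
    hilbCI [a, b] n = max 0 (min (min (a : ℤ) b) (min (n + 1) (a + b - 1 - n))) := by
  rw [hilbCI_cons]
  simp only [hilbCI_singleton]
  induction a with
  | zero => simp
  | succ a ih => rw [sum_range_succ, ih]; split_ifs <;> omega

theorem ci_codim4_even_middle_difference_general (d1 d2 d3 d4 : ℕ) (h12 : d1 ≤ d2)
    (h23 : d2 ≤ d3) (h34 : d3 ≤ d4) (e : ℤ) (he : e = d1 + d2 + d3 + d4 - 4) (heven : Even e) :
    ((d1 : ℤ) + d2 + d3 ≤ d4 →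
      hilbCI [d1, d2, d3, d4] (e / 2) - hilbCI [d1, d2, d3, d4] (e / 2 - 1) = 0) ∧
    (-(d1 : ℤ) + d2 + d3 ≤ d4 → (d4 : ℤ) ≤ d1 + d2 + d3 →
      2 * (hilbCI [d1, d2, d3, d4] (e / 2) - hilbCI [d1, d2, d3, d4] (e / 2 - 1)) =
        (d1 : ℤ) + d2 + d3 - d4) ∧
    ((d4 : ℤ) ≤ -(d1 : ℤ) + d2 + d3 →
      hilbCI [d1, d2, d3, d4] (e / 2) - hilbCI [d1, d2, d3, d4] (e / 2 - 1) = d1) := by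
  obtain ⟨s, rfl⟩ : ∃ s, e = s + s := heven
  have hs : (s + s) / 2 = s := by omega
  have hmid : hilbCI [d1, d2, d3, d4] s - hilbCI [d1, d2, d3, d4] (s - 1) =
      hilbCI [d1, d2] (s + 1 - d3) - hilbCI [d1, d2] (s + 1) := by
    have h4 : hilbCI [d1, d2, d3, d4] s - hilbCI [d1, d2, d3, d4] (s - 1) =
        hilbCI [d1, d2, d3] s - hilbCI [d1, d2, d3] (s - d4) :=
      hilbCI_concat_sub [d1, d2, d3] d4 s
    have h3 : hilbCI [d1, d2, d3] (s + 1) - hilbCI [d1, d2, d3] s =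
        hilbCI [d1, d2] (s + 1) - hilbCI [d1, d2] (s + 1 - d3) := by
      simpa using hilbCI_concat_sub [d1, d2] d3 (s + 1)
    have hsymm : hilbCI [d1, d2, d3] (s - d4) = hilbCI [d1, d2, d3] (s + 1) := by
      rw [hilbCI_symm]; congr 1; simp [ciSocleDegree]; omega
    linarith
  rw [hs, hmid, hilbCI_pair, hilbCI_pair]
  omega

theorem ci_codim4_even_middle_difference (d1 d2 d3 d4 : ℕ) (hd1 : 0 < d1) (h12 : d1 ≤ d2)
    (h23 : d2 ≤ d3) (h34 : d3 ≤ d4) (e : ℤ) (he : e = d1 + d2 + d3 + d4 - 4) (heven : Even e) :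
    ((d1 : ℤ) + d2 + d3 ≤ d4 →
      hilbCI [d1, d2, d3, d4] (e / 2) - hilbCI [d1, d2, d3, d4] (e / 2 - 1) = 0) ∧
    (-(d1 : ℤ) + d2 + d3 ≤ d4 → (d4 : ℤ) ≤ d1 + d2 + d3 →
      2 * (hilbCI [d1, d2, d3, d4] (e / 2) - hilbCI [d1, d2, d3, d4] (e / 2 - 1)) =
        (d1 : ℤ) + d2 + d3 - d4) ∧
    ((d4 : ℤ) ≤ -(d1 : ℤ) + d2 + d3 →
      hilbCI [d1, d2, d3, d4] (e / 2) - hilbCI [d1, d2, d3, d4] (e / 2 - 1) = d1) :=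
  ci_codim4_even_middle_difference_general d1 d2 d3 d4 h12 h23 h34 e he heven
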